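/- For any finite EG program Γ, the completion of the infinitary program τ₁Γ is satisfied by exactly the same interpretations of the vocabulary of Γ as the set of completed definitions of the predicate symbols occurring in Γ. -/

import Mathlib

namespace EG


/-! ### Relation symbols -/

inductive Rel : Type where
  | req | rne | rlt | rle | rgt | rge

/-- Evaluation of a relation symbol relative to a strict total order `lt`
on the domain (equality is genuine equality of domain elements). -/
def Rel.eval {α : Type} (lt : α → α → Prop) : Rel → α → α → Prop
  | .req, a, b => a = b
  | .rne, a, b => a ≠ b
  | .rlt, a, b => lt a b
  | .rle, a, b => lt a b ∨ a = b
  | .rgt, a, b => lt b a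
  | .rge, a, b => lt b a ∨ a = b

/-! ### Precomputed terms -/

/-- Precomputed terms over a type `C` of symbolic constants:
numerals, symbolic constants, `inf`, `sup`, and applications of a symbolic
constant to a tuple of precomputed terms. -/
inductive Pre (C : Type) : Type where
  | inf
  | sup
  | num (n : ℤ)
  | sym (c : C)
  | app (f : C) (args : List (Pre C))

/-- The assumed total order on precomputed terms: a strict total order with
`inf` least, `sup` greatest, in which numerals are ordered as the integers. -/
structure PreOrderOK {C : Type} (lt : Pre C → Pre C → Prop) : Prop where
  irrefl : ∀ a, ¬ lt a a
  trans : ∀ a b c, lt a b → lt b c → lt a c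
  total : ∀ a b, lt a b ∨ a = b ∨ lt b a
  inf_least : ∀ a, a ≠ Pre.inf → lt Pre.inf a
  sup_greatest : ∀ a, a ≠ Pre.sup → lt a Pre.sup
  num_iff : ∀ m n : ℤ, (lt (Pre.num m) (Pre.num n) ↔ m < n)

/-- Atoms `p(r)` where `r` is a tuple of precomputed terms. -/
abbrev EGAtom (C : Type) := C × List (Pre C)

/-- An interpretation is a set of atoms over precomputed terms. -/
abbrev Interp (C : Type) := Set (EGAtom C)

/-- Valuations: variables (natural numbers) ↦ precomputed terms. -/
abbrev Val (C : Type) := ℕ → Pre C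

/-- Simultaneously update a valuation on a list of variables by a list of values. -/
def updList {C : Type} : Val C → List ℕ → List (Pre C) → Val C
  | v, [], _ => v
  | v, _ :: _, [] => v
  | v, x :: xs, r :: rs => Function.update (updList v xs rs) x r

/-! ### Terms -/

/-- Terms over symbolic constants `C` and operation names `O`. -/
inductive Term (C O : Type) : Type where
  | num (n : ℤ)
  | sym (c : C)
  | var (x : ℕ)
  | inf
  | sup
  | app (f : C) (ts : List (Term C O))
  | op (o : O) (ts : List (Term C O))
  | interval (t₁ t₂ : Term C O)

mutual
/-- The list of variables occurring in a term. -/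
def Term.varList {C O : Type} : Term C O → List ℕ
  | .num _ => []
  | .sym _ => []
  | .var x => [x]
  | .inf => []
  | .sup => []
  | .app _ ts => Term.varListL ts
  | .op _ ts => Term.varListL ts
  | .interval t₁ t₂ => t₁.varList ++ t₂.varList

def Term.varListL {C O : Type} : List (Term C O) → List ℕ
  | [] => []
  | t :: ts => t.varList ++ Term.varListL ts
end

/-- A term (or tuple of terms, etc.) is ground if it contains no variables. -/
def Term.Ground {C O : Type} (t : Term C O) : Prop := t.varList = []

mutual
/-- The set of values of a term under a valuation `v` (for a ground term this
is the set `[t]` of its values, independent of `v`). `opFun` gives the partial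
integer function denoted by each operation name. -/
def Term.val {C O : Type} (opFun : O → List ℤ → Option ℤ) (v : Val C) :
    Term C O → Set (Pre C)
  | .num n => {Pre.num n}
  | .sym c => {Pre.sym c}
  | .var x => {v x}
  | .inf => {Pre.inf}
  | .sup => {Pre.sup}
  | .app f ts => {r | ∃ rs : List (Pre C), Term.vals opFun v ts rs ∧ r = Pre.app f rs}
  | .op o ts => {r | ∃ ks : List ℤ, Term.vals opFun v ts (ks.map Pre.num) ∧
      ∃ m : ℤ, opFun o ks = some m ∧ r = Pre.num m}
  | .interval t₁ t₂ => {r | ∃ k₁ k₂ m : ℤ, Pre.num k₁ ∈ Term.val opFun v t₁ ∧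
      Pre.num k₂ ∈ Term.val opFun v t₂ ∧ k₁ ≤ m ∧ m ≤ k₂ ∧ r = Pre.num m}

/-- `Term.vals opFun v ts rs` : the tuple `rs` of precomputed terms is a tuple of
values of the tuple `ts` of terms (componentwise). -/
def Term.vals {C O : Type} (opFun : O → List ℤ → Option ℤ) (v : Val C) :
    List (Term C O) → List (Pre C) → Prop
  | [], rs => rs = []
  | t :: ts, rs => ∃ r rs', rs = r :: rs' ∧ r ∈ Term.val opFun v t ∧ Term.vals opFun v ts rs'
end

mutual
/-- Embedding of precomputed terms into terms. -/
def Pre.toTerm {C O : Type} : Pre C → Term C O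
  | .inf => .inf
  | .sup => .sup
  | .num n => .num n
  | .sym c => .sym c
  | .app f rs => .app f (Pre.toTermL rs)

def Pre.toTermL {C O : Type} : List (Pre C) → List (Term C O)
  | [] => []
  | r :: rs => Pre.toTerm r :: Pre.toTermL rs
end


/-! ### Formulas with aggregates -/

mutual
/-- Arguments of the extended (aggregate) language. -/
inductive AArg (C O A : Type) : Type where
  | num (n : ℤ)
  | sym (c : C)
  | var (x : ℕ)
  | inf
  | sup
  | app (f : C) (args : List (AArg C O A))
  | agg (a : A) (xs : List ℕ) (F : AFml C O A)

/-- Formulas of the extended (aggregate) first-order language over the domain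
of precomputed terms. -/
inductive AFml (C O A : Type) : Type where
  | atom (p : C) (args : List (AArg C O A))
  | cmp (rel : Rel) (a₁ a₂ : AArg C O A)
  | mem (a : AArg C O A) (t : Term C O)
  | bot
  | impl (F G : AFml C O A)
  | all (x : ℕ) (F : AFml C O A)
end

section Sem
variable {C O A : Type}
variable (opFun : O → List ℤ → Option ℤ)
variable (aggFun : A → Set (List (Pre C)) → Pre C)
variable (lt : Pre C → Pre C → Prop)

mutual
/-- The precomputed term denoted by an argument (joint recursion with `AFml.sat`). -/
def AArg.eval (I : Interp C) : Val C → AArg C O A → Pre C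
  | _, .num n => Pre.num n
  | _, .sym c => Pre.sym c
  | v, .var x => v x
  | _, .inf => Pre.inf
  | _, .sup => Pre.sup
  | v, .app f args => Pre.app f (AArg.evalL I v args)
  | v, .agg a xs F => aggFun a
      {rs : List (Pre C) | rs.length = xs.length ∧ AFml.sat I (updList v xs rs) F}

def AArg.evalL (I : Interp C) : Val C → List (AArg C O A) → List (Pre C)
  | _, [] => []
  | v, a :: as => AArg.eval I v a :: AArg.evalL I v as

/-- Satisfaction of a formula by an interpretation `I` under a valuation `v`. -/
def AFml.sat (I : Interp C) : Val C → AFml C O A → Prop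
  | v, .atom p args => (p, AArg.evalL I v args) ∈ I
  | v, .cmp rel a₁ a₂ => Rel.eval lt rel (AArg.eval I v a₁) (AArg.eval I v a₂)
  | v, .mem a t => AArg.eval I v a ∈ Term.val opFun v t
  | _, .bot => False
  | v, .impl F G => AFml.sat I v F → AFml.sat I v G
  | v, .all x F => ∀ r : Pre C, AFml.sat I (Function.update v x r) F
end

end Sem
/-! ### Infinitary propositional formulas -/

/-- Infinitary propositional formulas over a type `α` of atoms: atoms, `⊥`,
conjunctions and disjunctions of arbitrary families of formulas, implication. -/
inductive IForm (α : Type) : Type 1 where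
  | atom (a : α)
  | bot
  | conj (ι : Type) (f : ι → IForm α)
  | disj (ι : Type) (f : ι → IForm α)
  | impl (F G : IForm α)

namespace IForm

variable {α : Type}

/-- `⊤` as the empty conjunction. -/
def top : IForm α := conj Empty (fun e => e.elim)
def neg (F : IForm α) : IForm α := impl F bot
def and (F G : IForm α) : IForm α := conj Bool (fun b => cond b F G)
def or (F G : IForm α) : IForm α := disj Bool (fun b => cond b F G)
def conjList (l : List (IForm α)) : IForm α := conj (Fin l.length) (fun i => l.get i)

/-- Classical satisfaction of infinitary formulas. -/
def sat (I : Set α) : IForm α → Prop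
  | atom a => a ∈ I
  | bot => False
  | conj _ f => ∀ i, sat I (f i)
  | disj _ f => ∃ i, sat I (f i)
  | impl F G => sat I F → sat I G

open Classical in
/-- The Ferraris reduct of an infinitary formula relative to an interpretation:
every (maximal) subformula not satisfied by `I` is replaced by `⊥`. -/
noncomputable def reduct (I : Set α) : IForm α → IForm α
  | atom a => if a ∈ I then atom a else bot
  | bot => bot
  | conj ι f => conj ι (fun i => reduct I (f i))
  | disj ι f => disj ι (fun i => reduct I (f i))
  | impl F G => if sat I (impl F G) then impl (reduct I F) (reduct I G) else bot

/-- `I` is a stable model of `F` (Ferraris semantics for infinitary formulas):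
`I` is a minimal model of the reduct `F^I`. -/
def stable (I : Set α) (F : IForm α) : Prop :=
  sat I (reduct I F) ∧ ∀ J : Set α, J ⊆ I → sat J (reduct I F) → J = I

/-- Satisfaction in the infinitary logic of here-and-there `HT^∞`, for an
HT-interpretation given by `J ⊆ I` ("here" `J`, "there" `I`). -/
def satHT (J I : Set α) : IForm α → Prop
  | atom a => a ∈ J
  | bot => False
  | conj _ f => ∀ i, satHT J I (f i)
  | disj _ f => ∃ i, satHT J I (f i)
  | impl F G => (satHT J I F → satHT J I G) ∧ (sat I F → sat I G)

/-- Strong equivalence of infinitary formulas, i.e. equivalence in `HT^∞`. -/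
def HTEquiv (F G : IForm α) : Prop :=
  ∀ J I : Set α, J ⊆ I → (satHT J I F ↔ satHT J I G) ∧ (sat I F ↔ sat I G)

mutual
/-- Positive nonnegated atoms of an infinitary formula. -/
def Pnn : IForm α → Set α
  | atom a => {a}
  | bot => ∅
  | conj _ f => ⋃ i, Pnn (f i)
  | disj _ f => ⋃ i, Pnn (f i)
  | impl _ bot => ∅
  | impl G H => Nnn G ∪ Pnn H

/-- Negative nonnegated atoms of an infinitary formula. -/
def Nnn : IForm α → Set α
  | atom _ => ∅
  | bot => ∅
  | conj _ f => ⋃ i, Nnn (f i)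
  | disj _ f => ⋃ i, Nnn (f i)
  | impl _ bot => ∅
  | impl G H => Pnn G ∪ Nnn H
end

end IForm

/-! ### Infinitary programs -/

/-- An infinitary rule `F → A`. -/
structure IRule (α : Type) : Type 1 where
  body : IForm α
  head : α

/-- An infinitary program: a conjunction (represented as a set) of infinitary rules. -/
abbrev IProg (α : Type) := Set (IRule α)

def IRule.toForm {α : Type} (r : IRule α) : IForm α := .impl r.body (.atom r.head)

namespace IProg
variable {α : Type}

/-- `I` satisfies the program (i.e., the conjunction of its rules). -/
def sat (I : Set α) (P : IProg α) : Prop := ∀ r ∈ P, IForm.sat I r.toForm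

/-- `I` is a stable model of the program, i.e., of the conjunction of its rules:
`I` is a minimal model of the reduct of that conjunction. -/
def stable (I : Set α) (P : IProg α) : Prop :=
  (∀ r ∈ P, IForm.sat I (IForm.reduct I r.toForm)) ∧
  ∀ J : Set α, J ⊆ I → (∀ r ∈ P, IForm.sat J (IForm.reduct I r.toForm)) → J = I

/-- `I` is supported by the program. -/
def supported (I : Set α) (P : IProg α) : Prop :=
  ∀ a ∈ I, ∃ r ∈ P, r.head = a ∧ IForm.sat I r.body

/-- `I` satisfies the completion of `P`, with signature (set of atoms) `S`:
the conjunction over all atoms `A ∈ S` of `A ↔ ⋁ (P|_A)`. -/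
def satCompletionOn (S : Set α) (I : Set α) (P : IProg α) : Prop :=
  ∀ a ∈ S, (a ∈ I ↔ ∃ r ∈ P, r.head = a ∧ IForm.sat I r.body)

/-- `B` is a parent of `A` relative to `P` and `I`. -/
def parent (P : IProg α) (I : Set α) (B A : α) : Prop :=
  A ∈ I ∧ B ∈ I ∧ ∃ r ∈ P, r.head = A ∧ IForm.sat I r.body ∧ B ∈ IForm.Pnn r.body

/-- `P` is tight on `I`: there is no infinite sequence of elements of `I` in
which each element is followed by one of its parents. -/
def tightOn (P : IProg α) (I : Set α) : Prop :=
  ¬ ∃ f : ℕ → α, (∀ i, f i ∈ I) ∧ ∀ i, parent P I (f (i + 1)) (f i)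

end IProg
/-! ### Programs -/

/-- A literal: an atom `p(t₁,…,tₙ)` (`pos = true`) or such an atom preceded
by `not` (`pos = false`). -/
structure Lit (C O : Type) : Type where
  pos : Bool
  pred : C
  args : List (Term C O)

/-- A comparison `t₁ ≺ t₂`. -/
structure Comp (C O : Type) : Type where
  rel : Rel
  lhs : Term C O
  rhs : Term C O

/-- An element of the condition of an aggregate expression: a literal or comparison. -/
abbrev CondElem (C O : Type) := Lit C O ⊕ Comp C O

def Lit.varList {C O : Type} (l : Lit C O) : List ℕ := Term.varListL l.args
def Comp.varList {C O : Type} (c : Comp C O) : List ℕ := c.lhs.varList ++ c.rhs.varList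
def CondElem.varList {C O : Type} : CondElem C O → List ℕ :=
  Sum.elim Lit.varList Comp.varList

/-- An aggregate expression `α{t : C} ≺ s`, where `s` is a variable or a
precomputed term. -/
structure AggExpr (C O A : Type) : Type where
  name : A
  ts : List (Term C O)
  cond : List (CondElem C O)
  rel : Rel
  bound : ℕ ⊕ Pre C

def AggExpr.lhsVarList {C O A : Type} (E : AggExpr C O A) : List ℕ :=
  Term.varListL E.ts ++ E.cond.flatMap CondElem.varList

def boundVarList {C : Type} : ℕ ⊕ Pre C → List ℕ
  | .inl x => [x]
  | .inr _ => []

def AggExpr.varList {C O A : Type} (E : AggExpr C O A) : List ℕ :=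
  E.lhsVarList ++ boundVarList E.bound

/-- An aggregate expression is closed if its bound `s` is ground
(i.e., a precomputed term). -/
def AggExpr.ClosedBound {C O A : Type} (E : AggExpr C O A) : Prop :=
  ∃ r : Pre C, E.bound = Sum.inr r

/-- A conjunctive term of a rule body. -/
inductive BElem (C O A : Type) : Type where
  | lit (l : Lit C O)
  | comp (c : Comp C O)
  | agg (E : AggExpr C O A)

def BElem.varList {C O A : Type} : BElem C O A → List ℕ
  | .lit l => l.varList
  | .comp c => c.varList
  | .agg E => E.varList

/-- A body element suitable for the translation `τ`: a ground literal,
a ground comparison, or a closed aggregate expression. -/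
def BElem.ClosedC {C O A : Type} : BElem C O A → Prop
  | .lit l => l.varList = []
  | .comp c => c.varList = []
  | .agg E => E.ClosedBound

/-- The head of a rule. -/
inductive Head (C O : Type) : Type where
  | basic (p : C) (ts : List (Term C O))
  | choice (p : C) (ts : List (Term C O))
  | empty

def Head.varList {C O : Type} : Head C O → List ℕ
  | .basic _ ts => Term.varListL ts
  | .choice _ ts => Term.varListL ts
  | .empty => []

/-- A rule `Head ← Body`. -/
structure Rule (C O A : Type) : Type where
  head : Head C O
  body : List (BElem C O A)

def Rule.varList {C O A : Type} (R : Rule C O A) : List ℕ :=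
  R.head.varList ++ R.body.flatMap BElem.varList

/-- The variables with an occurrence in the rule outside the left-hand sides
`α{t : C}` of aggregate expressions (head, literal and comparison conjuncts,
and bounds of aggregate expressions); these are the global variables. -/
def Rule.globalList {C O A : Type} (R : Rule C O A) : List ℕ :=
  (R.head.varList ++ R.body.flatMap (fun b =>
    match b with
    | .lit l => l.varList
    | .comp c => c.varList
    | .agg E => boundVarList E.bound)).dedup

/-- The local variables of a rule: those occurring in the rule, all of whose
occurrences are inside left-hand sides of aggregate expressions of its body. -/
def Rule.localList {C O A : Type} (R : Rule C O A) : List ℕ :=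
  ((R.body.flatMap (fun b =>
    match b with
    | .agg E => E.lhsVarList
    | _ => [])).dedup).filter (fun x => x ∉ R.globalList)

/-- A rule is closed if all its variables are local. -/
def Rule.Closed {C O A : Type} (R : Rule C O A) : Prop := R.globalList = []

/-! ### Predicate symbol occurrences, vocabulary, dependency graph -/

def Lit.hasPred {C O : Type} (p : C) (n : ℕ) (l : Lit C O) : Prop :=
  l.pred = p ∧ l.args.length = n

def CondElem.hasPred {C O : Type} (p : C) (n : ℕ) : CondElem C O → Prop
  | .inl l => l.hasPred p n
  | .inr _ => False

def AggExpr.hasPred {C O A : Type} (p : C) (n : ℕ) (E : AggExpr C O A) : Prop :=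
  ∃ ce ∈ E.cond, CondElem.hasPred p n ce

/-- The predicate symbol `p/n` occurs in a body element. -/
def BElem.hasPred {C O A : Type} (p : C) (n : ℕ) : BElem C O A → Prop
  | .lit l => l.hasPred p n
  | .comp _ => False
  | .agg E => E.hasPred p n

/-- The predicate symbol `p/n` occurs in a positive literal or in an aggregate
expression (condition (ii′)). -/
def BElem.hasPosOrAggPred {C O A : Type} (p : C) (n : ℕ) : BElem C O A → Prop
  | .lit l => l.pos = true ∧ l.hasPred p n
  | .comp _ => False
  | .agg E => E.hasPred p n

def Head.hasPred {C O : Type} (p : C) (n : ℕ) : Head C O → Prop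
  | .basic q ts => q = p ∧ ts.length = n
  | .choice q ts => q = p ∧ ts.length = n
  | .empty => False

/-- The predicate symbol `p/n` occurs in the rule `R`. -/
def Rule.hasPredSym {C O A : Type} (p : C) (n : ℕ) (R : Rule C O A) : Prop :=
  R.head.hasPred p n ∨ ∃ e ∈ R.body, BElem.hasPred p n e

/-- The vocabulary of a program: all atoms `p(r)` with `r` a tuple of `n`
precomputed terms and `p/n` occurring in the program. -/
def vocab {C O A : Type} (Γ : Set (Rule C O A)) : Set (EGAtom C) :=
  {a | ∃ R ∈ Γ, Rule.hasPredSym a.1 a.2.length R}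

/-- The edge relation of the dependency graph `G_Γ` on predicate symbols. -/
def DepEdge {C O A : Type} (Γ : Set (Rule C O A)) (q p : C × ℕ) : Prop :=
  ∃ R ∈ Γ, R.head.hasPred q.1 q.2 ∧ ∃ e ∈ R.body, BElem.hasPosOrAggPred p.1 p.2 e

/-- A program is tight if its dependency graph is acyclic. -/
def EGTight {C O A : Type} (Γ : Set (Rule C O A)) : Prop :=
  ∀ s : C × ℕ, ¬ Relation.TransGen (DepEdge Γ) s s


/-! ### Embeddings and aggregate-freeness -/

mutual
/-- Embedding of precomputed terms into arguments of the extended language. -/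
def Pre.toAArg {C O A : Type} : Pre C → AArg C O A
  | .inf => .inf
  | .sup => .sup
  | .num n => .num n
  | .sym c => .sym c
  | .app f rs => .app f (Pre.toAArgL rs)

def Pre.toAArgL {C O A : Type} : List (Pre C) → List (AArg C O A)
  | [] => []
  | r :: rs => Pre.toAArg r :: Pre.toAArgL rs
end

mutual
/-- The number of occurrences of aggregate names in an argument;
an argument is aggregate-free iff this is `0`. -/
def AArg.countAgg {C O A : Type} : AArg C O A → ℕ
  | .num _ => 0
  | .sym _ => 0
  | .var _ => 0
  | .inf => 0
  | .sup => 0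
  | .app _ args => AArg.countAggL args
  | .agg _ _ F => F.countAgg + 1

def AArg.countAggL {C O A : Type} : List (AArg C O A) → ℕ
  | [] => 0
  | a :: as => a.countAgg + AArg.countAggL as

def AFml.countAgg {C O A : Type} : AFml C O A → ℕ
  | .atom _ args => AArg.countAggL args
  | .cmp _ a₁ a₂ => a₁.countAgg + a₂.countAgg
  | .mem a _ => a.countAgg
  | .bot => 0
  | .impl F G => F.countAgg + G.countAgg
  | .all _ F => F.countAgg
end

/-- An argument contains no aggregate names. -/
def AArg.AggFree {C O A : Type} (a : AArg C O A) : Prop := a.countAgg = 0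

mutual
/-- An aggregate-free argument, viewed as a term (the `agg` case is junk and
is never relevant for aggregate-free arguments). -/
def AArg.toTerm {C O A : Type} : AArg C O A → Term C O
  | .num n => .num n
  | .sym c => .sym c
  | .var x => .var x
  | .inf => .inf
  | .sup => .sup
  | .app f args => .app f (AArg.toTermL args)
  | .agg _ _ _ => .inf

def AArg.toTermL {C O A : Type} : List (AArg C O A) → List (Term C O)
  | [] => []
  | a :: as => a.toTerm :: AArg.toTermL as
end

/-! ### Abbreviated connectives of the extended first-order language -/

namespace AFml
variable {C O A : Type}

def negF (F : AFml C O A) : AFml C O A := .impl F .bot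
def topF : AFml C O A := negF .bot
def andF (F G : AFml C O A) : AFml C O A := .impl (.impl F (.impl G .bot)) .bot
def orF (F G : AFml C O A) : AFml C O A := .impl (negF F) G
def iffF (F G : AFml C O A) : AFml C O A := andF (.impl F G) (.impl G F)
def exF (x : ℕ) (F : AFml C O A) : AFml C O A := negF (.all x (negF F))
def andList (l : List (AFml C O A)) : AFml C O A := l.foldr andF topF
def orList (l : List (AFml C O A)) : AFml C O A := l.foldr orF .bot
def exList (xs : List ℕ) (F : AFml C O A) : AFml C O A := xs.foldr exF F
def allList (xs : List ℕ) (F : AFml C O A) : AFml C O A := xs.foldr .all F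

end AFml

/-! ### The translation φ (formula representations) -/

/-- A variable index strictly greater than every element of `l`
(used to pick new/fresh variables). -/
def freshVar (l : List ℕ) : ℕ := l.foldr max 0 + 1

/-- The bound `s` of an aggregate expression, as a term. -/
def boundTerm {C O : Type} : ℕ ⊕ Pre C → Term C O
  | .inl x => .var x
  | .inr r => r.toTerm

section Phi
variable {C O A : Type}

/-- `φ` of a literal: `∃X(X ∈ t ∧ p(X))`, resp. `∃X(X ∈ t ∧ ¬p(X))`,
with `X` a tuple of new variables. -/
def phiLit (l : Lit C O) : AFml C O A :=
  let n := freshVar l.varList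
  let ws := (List.range l.args.length).map (· + n)
  AFml.exList ws (AFml.andF
    (AFml.andList ((ws.zip l.args).map (fun q => AFml.mem (AArg.var q.1) q.2)))
    (if l.pos then AFml.atom l.pred (ws.map AArg.var)
     else AFml.negF (AFml.atom l.pred (ws.map AArg.var))))

/-- `φ` of a comparison: `∃X₁X₂(X₁ ∈ t₁ ∧ X₂ ∈ t₂ ∧ X₁ ≺ X₂)`. -/
def phiComp (c : Comp C O) : AFml C O A :=
  let n := freshVar c.varList
  AFml.exF n (AFml.exF (n + 1) (AFml.andF (AFml.mem (AArg.var n) c.lhs)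
    (AFml.andF (AFml.mem (AArg.var (n + 1)) c.rhs)
      (AFml.cmp c.rel (AArg.var n) (AArg.var (n + 1))))))

def phiCondElem : CondElem C O → AFml C O A :=
  Sum.elim phiLit phiComp

/-- `φ` of a conjunction of literals and comparisons. -/
def phiCond (cond : List (CondElem C O)) : AFml C O A :=
  AFml.andList (cond.map phiCondElem)

/-- `φ^X` of an aggregate expression `α{t : C} ≺ s` (with `X = xs` the
variables treated as local):
`∃Y(α{Z | ∃X(Z ∈ t ∧ φC)} ≺ Y ∧ Y ∈ s)`, with `Z`, `Y` new variables. -/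
def phiAgg (xs : List ℕ) (E : AggExpr C O A) : AFml C O A :=
  let n := freshVar (xs ++ E.varList)
  let zs := (List.range E.ts.length).map (· + (n + 1))
  AFml.exF n (AFml.andF
    (AFml.cmp E.rel
      (AArg.agg E.name zs
        (AFml.exList xs (AFml.andF
          (AFml.andList ((zs.zip E.ts).map (fun q => AFml.mem (AArg.var q.1) q.2)))
          (phiCond E.cond))))
      (AArg.var n))
    (AFml.mem (AArg.var n) (boundTerm E.bound)))

/-- `φ^X` of a body element, where `xs` is the list of variables treated as local. -/
def phiBElem (xs : List ℕ) : BElem C O A → AFml C O A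
  | .lit l => phiLit l
  | .comp c => phiComp c
  | .agg E => phiAgg xs E

/-- `φ^X` of a body (a conjunction of literals, comparisons and aggregate
expressions), where `xs` is the list of variables treated as local. -/
def phiBody (xs : List ℕ) (b : List (BElem C O A)) : AFml C O A :=
  AFml.andList (b.map (phiBElem xs))

/-- The formula representation of a constraint `← Body`: `¬ φ^X(Body)`,
where `X` is the list of local variables of the constraint. -/
def phiConstraintRep (R : Rule C O A) : AFml C O A :=
  AFml.negF (phiBody R.localList R.body)

/-- `V ∈ t` for a tuple `V` of variables and a tuple `t` of terms. -/
def memConj (Vs : List ℕ) (ts : List (Term C O)) : AFml C O A :=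
  AFml.andList ((Vs.zip ts).map (fun q => AFml.mem (AArg.var q.1) q.2))

/-- The antecedent `Fᵢ` of the formula representation `Fᵢ → p(V)` of a basic or
choice rule, where `Vs` is the chosen tuple `V` of new variables:
for a basic rule `V ∈ t ∧ φ^X(Body)`, for a choice rule
`V ∈ t ∧ φ^X(Body) ∧ p(V)`, with `X` the local variables of the rule. -/
def ruleAnte (Vs : List ℕ) (R : Rule C O A) : AFml C O A :=
  match R.head with
  | .basic _ ts => AFml.andF (memConj Vs ts) (phiBody R.localList R.body)
  | .choice p ts => AFml.andF (memConj Vs ts)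
      (AFml.andF (phiBody R.localList R.body) (AFml.atom p (Vs.map AArg.var)))
  | .empty => AFml.bot

/-- Does `R` belong to the definition of `p/n` (a basic or choice rule whose
head is of the form `p(t₁,…,tₙ)` or `{p(t₁,…,tₙ)}`)? -/
def definesB [DecidableEq C] (p : C) (n : ℕ) (R : Rule C O A) : Bool :=
  match R.head with
  | .basic q ts => decide (q = p ∧ ts.length = n)
  | .choice q ts => decide (q = p ∧ ts.length = n)
  | .empty => false

/-- The completed definition of the predicate symbol `p/n` in the finite
program `Γ`: `∀V(p(V) ↔ ⋁ᵢ ∃Uᵢ Fᵢ)`, where the `Fᵢ` come from the formula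
representations of the rules defining `p/n`, `V` is a tuple of new variables
chosen in the same way for all `i`, and `Uᵢ` is the list of free variables of
`Fᵢ` not in `V` (i.e., the global variables of the corresponding rule). -/
def completedDef [DecidableEq C] (Γ : List (Rule C O A)) (p : C) (n : ℕ) : AFml C O A :=
  let base := freshVar (Γ.flatMap Rule.varList)
  let Vs := (List.range n).map (· + base)
  AFml.allList Vs (AFml.iffF (AFml.atom p (Vs.map AArg.var))
    (AFml.orList ((Γ.filter (definesB p n)).map
      (fun R => AFml.exList R.globalList (ruleAnte Vs R)))))

end Phi

/-! ### The translation τ (grounding into infinitary formulas) -/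

section Tau
variable {C O A : Type}
variable (opFun : O → List ℤ → Option ℤ)
variable (aggFun : A → Set (List (Pre C)) → Pre C)
variable (lt : Pre C → Pre C → Prop)

/-- `τ` of a (ground instance of a) literal: `⋁_{r ∈ [t]} p(r)`, resp.
`⋁_{r ∈ [t]} ¬p(r)`; variables are evaluated by the valuation `v`. -/
def tauLit (v : Val C) (l : Lit C O) : IForm (EGAtom C) :=
  if l.pos then
    .disj {rs : List (Pre C) // Term.vals opFun v l.args rs}
      (fun rs => .atom (l.pred, rs.val))
  else
    .disj {rs : List (Pre C) // Term.vals opFun v l.args rs}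
      (fun rs => .neg (.atom (l.pred, rs.val)))

open Classical in
/-- `τ` of a (ground instance of a) comparison: `⊤` if the relation holds
between some values of the two terms, `⊥` otherwise. -/
noncomputable def tauComp (v : Val C) (c : Comp C O) : IForm (EGAtom C) :=
  if ∃ r₁ ∈ Term.val opFun v c.lhs, ∃ r₂ ∈ Term.val opFun v c.rhs,
      Rel.eval lt c.rel r₁ r₂
  then .top else .bot

noncomputable def tauCondElem (v : Val C) : CondElem C O → IForm (EGAtom C)
  | .inl l => tauLit opFun v l
  | .inr c => tauComp opFun lt v c

/-- `τ` of a conjunction of (ground instances of) literals and comparisons. -/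
noncomputable def tauCond (v : Val C) (cond : List (CondElem C O)) : IForm (EGAtom C) :=
  IForm.conjList (cond.map (tauCondElem opFun lt v))

/-- The value of the bound `s` of an aggregate expression under a valuation. -/
def boundVal (v : Val C) : ℕ ⊕ Pre C → Pre C
  | .inl x => v x
  | .inr r => r

/-- Tuples of precomputed terms matching the variable list `xs`. -/
def AggTuple (C : Type) (xs : List ℕ) : Type := {rs : List (Pre C) // rs.length = xs.length}

/-- `Δ` justifies the aggregate expression `E` (relative to the valuation `v`
and the list `xs` of its variables): `≺` holds between `α̂([Δ])` and `s`,
where `[Δ]` is the union of the value sets of the instantiated tuples `t`. -/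
def Justifies (v : Val C) (xs : List ℕ) (E : AggExpr C O A)
    (Δ : Set (AggTuple C xs)) : Prop :=
  Rel.eval lt E.rel
    (aggFun E.name
      {q | ∃ rs ∈ Δ, Term.vals opFun (updList v xs rs.val) E.ts q})
    (boundVal v E.bound)

/-- `τ` of a closed aggregate expression `E`, relative to the list `xs` of its
variables: the conjunction, over all subsets `Δ` of the set `A` of tuples of
precomputed terms matching `xs` that do not justify `E`, of the implications
`(⋀_{r∈Δ} τ(C^X_r)) → (⋁_{r∈A∖Δ} τ(C^X_r))`. -/
noncomputable def tauAgg (v : Val C) (xs : List ℕ) (E : AggExpr C O A) :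
    IForm (EGAtom C) :=
  .conj {Δ : Set (AggTuple C xs) // ¬ Justifies opFun aggFun lt v xs E Δ}
    (fun Δ => .impl
      (.conj {rs : AggTuple C xs // rs ∈ Δ.val}
        (fun rs => tauCond opFun lt (updList v xs rs.val.val) E.cond))
      (.disj {rs : AggTuple C xs // rs ∉ Δ.val}
        (fun rs => tauCond opFun lt (updList v xs rs.val.val) E.cond)))

/-- `τ` of a closed aggregate expression, with `X` the list of variables
occurring in it. -/
noncomputable def tauAggE (v : Val C) (E : AggExpr C O A) : IForm (EGAtom C) :=
  tauAgg opFun aggFun lt v (E.varList.dedup) E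

/-- `τ` of a body element of (an instance of) a rule whose list of local
variables is `loc`; in the instance, the variables occurring in an aggregate
expression `E` are the variables of `E` that are local in the rule. -/
noncomputable def tauBElem (v : Val C) (loc : List ℕ) : BElem C O A → IForm (EGAtom C)
  | .lit l => tauLit opFun v l
  | .comp c => tauComp opFun lt v c
  | .agg E => tauAgg opFun aggFun lt v (E.varList.dedup.filter (· ∈ loc)) E

/-- `τ` of the body of (an instance of) a rule with local variable list `loc`. -/
noncomputable def tauBody (v : Val C) (loc : List ℕ) (b : List (BElem C O A)) :
    IForm (EGAtom C) :=
  IForm.conjList (b.map (tauBElem opFun aggFun lt v loc))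

/-- `τ` of (an instance, given by the valuation `v`, of) a rule. -/
noncomputable def tauRule (v : Val C) (R : Rule C O A) : IForm (EGAtom C) :=
  match R.head with
  | .basic p ts => .impl (tauBody opFun aggFun lt v R.localList R.body)
      (.conj {rs : List (Pre C) // Term.vals opFun v ts rs}
        (fun rs => .atom (p, rs.val)))
  | .choice p ts => .impl (tauBody opFun aggFun lt v R.localList R.body)
      (.conj {rs : List (Pre C) // Term.vals opFun v ts rs}
        (fun rs => .or (.atom (p, rs.val)) (.neg (.atom (p, rs.val)))))
  | .empty => .neg (tauBody opFun aggFun lt v R.localList R.body)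

/-- `τΓ`: the conjunction of `τR` over all instances `R` of the rules of `Γ`
(instances given by valuations of the global variables). -/
noncomputable def tauProg (Γ : Set (Rule C O A)) : IForm (EGAtom C) :=
  .conj ({R : Rule C O A // R ∈ Γ} × Val C)
    (fun z => tauRule opFun aggFun lt z.2 z.1.val)

/-- Stable models of an EG program: stable models of `τΓ`. -/
noncomputable def EGStable (I : Interp C) (Γ : Set (Rule C O A)) : Prop :=
  IForm.stable I (tauProg opFun aggFun lt Γ)

/-- The infinitary program `τ₁Γ`: the rules `τ(Body) → p(r)` for all instances
of basic rules of `Γ` and all `r ∈ [t]`, together with the rules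
`τ(Body) ∧ ¬¬p(r) → p(r)` for all instances of choice rules and all `r ∈ [t]`. -/
noncomputable def tau1 (Γ : Set (Rule C O A)) : IProg (EGAtom C) :=
  {ir | ∃ R ∈ Γ, ∃ v : Val C,
    (∃ p ts rs, R.head = Head.basic p ts ∧ Term.vals opFun v ts rs ∧
      ir = ⟨tauBody opFun aggFun lt v R.localList R.body, (p, rs)⟩) ∨
    (∃ p ts rs, R.head = Head.choice p ts ∧ Term.vals opFun v ts rs ∧
      ir = ⟨IForm.and (tauBody opFun aggFun lt v R.localList R.body)
              (IForm.neg (IForm.neg (IForm.atom (p, rs)))), (p, rs)⟩)}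

/-- The infinitary formula `τ₂Γ`: the conjunction of `¬τ(C)` over all
instances `← C` of the constraints of `Γ`. -/
noncomputable def tau2 (Γ : Set (Rule C O A)) : IForm (EGAtom C) :=
  .conj ({R : Rule C O A // R ∈ Γ ∧ R.head = Head.empty} × Val C)
    (fun z => .neg (tauBody opFun aggFun lt z.2 z.1.val.localList z.1.val.body))

/-- `τ` of a closed conjunction of ground literals, ground comparisons and
closed aggregate expressions (each aggregate expression translated relative
to the list of its own variables). -/
noncomputable def tauBElemC (v : Val C) : BElem C O A → IForm (EGAtom C)
  | .lit l => tauLit opFun v l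
  | .comp c => tauComp opFun lt v c
  | .agg E => tauAggE opFun aggFun lt v E

noncomputable def tauBodyC (v : Val C) (b : List (BElem C O A)) : IForm (EGAtom C) :=
  IForm.conjList (b.map (tauBElemC opFun aggFun lt v))

end Tau

/-! ### Completion of an EG program -/

section Completion
variable {C O A : Type}
variable (opFun : O → List ℤ → Option ℤ)
variable (aggFun : A → Set (List (Pre C)) → Pre C)
variable (lt : Pre C → Pre C → Prop)

/-- `I` satisfies the completion of the finite program `Γ`: the completed
definitions of all predicate symbols occurring in `Γ` together with the
universal closures of the formula representations of all constraints of `Γ`. -/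
def SatCompletion [DecidableEq C] (Γ : List (Rule C O A)) (I : Interp C) : Prop :=
  (∀ (p : C) (n : ℕ), (∃ R ∈ Γ, Rule.hasPredSym p n R) →
    ∀ v : Val C, AFml.sat opFun aggFun lt I v (completedDef Γ p n)) ∧
  (∀ R ∈ Γ, R.head = Head.empty →
    ∀ v : Val C, AFml.sat opFun aggFun lt I v (phiConstraintRep R))

end Completion

/-!
Both sides say, for every atom `p(r)` of the vocabulary, that `p(r) ∈ I` iff some instance of
a rule defining `p` has `r` among the values of its head and a body that holds in `I` (for a
choice rule, together with `p(r)` itself). For the completion of `τ₁Γ` these instances are the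
disjuncts of `τ₁Γ|_{p(r)}`; for the completed definition they are the witnesses for the global
variables `Uᵢ` in `∃Uᵢ Fᵢ` at `V = r`. The two descriptions match because `φ^X(Body)` holds
under a valuation exactly when `τ` of the corresponding instance of the body does, conjunct by
conjunct. For an aggregate expression the set aggregated by `φ` is `[Δ]` for the set `Δ` of
tuples whose condition holds, and this `Δ` is the only one for which an implication of `τ` can
fail.
-/

section Valuations

variable {C : Type}

theorem updList_apply_of_not_mem {v : Val C} {xs : List ℕ} {rs : List (Pre C)} {x : ℕ}
    (h : x ∉ xs) : updList v xs rs x = v x := by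
  induction xs generalizing rs with
  | nil => rfl
  | cons y ys ih =>
    rw [List.mem_cons, not_or] at h
    cases rs with
    | nil => rfl
    | cons r rs => rw [updList, Function.update_of_ne h.1, ih h.2]

theorem updList_update_comm {v : Val C} {xs : List ℕ} {rs : List (Pre C)} {x : ℕ}
    {r : Pre C} (h : x ∉ xs) :
    updList (Function.update v x r) xs rs = Function.update (updList v xs rs) x r := by
  induction xs generalizing rs with
  | nil => rfl
  | cons y ys ih =>
    rw [List.mem_cons, not_or] at h
    cases rs with
    | nil => rfl
    | cons r' rs => rw [updList, updList, ih h.2, Function.update_comm h.1]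

theorem updList_map_apply {v u : Val C} {xs : List ℕ} {x : ℕ}
    (hnd : xs.Nodup) (hx : x ∈ xs) : updList v xs (xs.map u) x = u x := by
  induction xs with
  | nil => simp at hx
  | cons y ys ih =>
    rw [List.nodup_cons] at hnd
    rw [List.map_cons, updList]
    rcases List.mem_cons.mp hx with rfl | hx'
    · exact Function.update_self _ _ _
    · rw [Function.update_of_ne (by rintro rfl; exact hnd.1 hx'), ih hnd.2 hx']

theorem map_updList {v : Val C} {xs : List ℕ} {rs : List (Pre C)}
    (hnd : xs.Nodup) (hlen : rs.length = xs.length) : xs.map (updList v xs rs) = rs := by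
  induction xs generalizing rs with
  | nil => exact (List.length_eq_zero_iff.mp hlen).symm
  | cons y ys ih =>
    rw [List.nodup_cons] at hnd
    cases rs with
    | nil => simp at hlen
    | cons r rs =>
      rw [List.map_cons, updList, Function.update_self]
      refine congrArg _ ((List.map_congr_left fun x hx => ?_).trans
        (ih hnd.2 (by simpa using hlen)))
      exact Function.update_of_ne (by rintro rfl; exact hnd.1 hx) _ _

theorem updList_apply_indep_of_mem {u v : Val C} {xs : List ℕ} {rs : List (Pre C)} {x : ℕ}
    (hlen : rs.length = xs.length) (hx : x ∈ xs) : updList u xs rs x = updList v xs rs x := by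
  induction xs generalizing rs with
  | nil => simp at hx
  | cons y ys ih =>
    cases rs with
    | nil => simp at hlen
    | cons r rs =>
      simp only [updList, Function.update_apply]
      split_ifs with hxy
      · rfl
      · exact ih (by simpa using hlen) ((List.mem_cons.mp hx).resolve_left hxy)

theorem exists_updList_iff {P : Val C → Prop} {S xs : List ℕ} {w : Val C}
    (hP : ∀ u u' : Val C, (∀ x ∈ S, u x = u' x) → P u → P u') (hnd : xs.Nodup) :
    (∃ rs : List (Pre C), rs.length = xs.length ∧ P (updList w xs rs)) ↔
      ∃ u : Val C, (∀ x ∈ S, x ∉ xs → u x = w x) ∧ P u := by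
  constructor
  · rintro ⟨rs, -, hrs⟩
    exact ⟨_, fun x _ hx => updList_apply_of_not_mem hx, hrs⟩
  · rintro ⟨u, hu, hPu⟩
    refine ⟨xs.map u, List.length_map _, hP u _ (fun x hxS => ?_) hPu⟩
    by_cases hx : x ∈ xs
    · exact (updList_map_apply hnd hx).symm
    · rw [updList_apply_of_not_mem hx, hu x hxS hx]

theorem lt_freshVar {x : ℕ} {l : List ℕ} (h : x ∈ l) : x < freshVar l :=
  Nat.lt_succ_of_le (List.le_max_of_le' 0 h le_rfl)

theorem map_add_range_eq_range' (n b : ℕ) : (List.range n).map (· + b) = List.range' b n := by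
  rw [List.range'_eq_map_range]
  exact List.map_congr_left fun x _ => Nat.add_comm x b

end Valuations

namespace IForm

variable {α : Type} {I : Set α}

theorem sat_top : sat I (top : IForm α) := fun i => i.elim

theorem sat_and {F G : IForm α} : sat I (IForm.and F G) ↔ sat I F ∧ sat I G :=
  ⟨fun h => ⟨h true, h false⟩, fun h b => b.casesOn h.2 h.1⟩

theorem sat_conjList {l : List (IForm α)} : sat I (conjList l) ↔ ∀ F ∈ l, sat I F := by
  simp only [conjList, sat, List.forall_mem_iff_getElem]
  exact ⟨fun h i hi => h ⟨i, hi⟩, fun h i => h i.1 i.2⟩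

end IForm

namespace AFml

variable {C O A : Type} (opFun : O → List ℤ → Option ℤ)
  (aggFun : A → Set (List (Pre C)) → Pre C) (lt : Pre C → Pre C → Prop) {I : Interp C}
  {v : Val C} {F G : AFml C O A}

local notation "sat" => AFml.sat opFun aggFun lt I

theorem sat_negF : sat v (negF F) ↔ ¬ sat v F := Iff.rfl

theorem sat_andF : sat v (andF F G) ↔ sat v F ∧ sat v G := by
  simp [andF, AFml.sat]

theorem sat_orF : sat v (orF F G) ↔ sat v F ∨ sat v G := by
  simp only [orF, negF, AFml.sat]
  tauto

theorem sat_iffF : sat v (iffF F G) ↔ (sat v F ↔ sat v G) := by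
  simp only [iffF, sat_andF, AFml.sat]
  exact iff_iff_implies_and_implies.symm

theorem sat_andList {l : List (AFml C O A)} : sat v (andList l) ↔ ∀ F ∈ l, sat v F := by
  induction l with
  | nil => exact iff_of_true (fun h => h) (by simp)
  | cons F l ih => rw [List.forall_mem_cons, ← ih, andList, List.foldr_cons, sat_andF]; rfl

theorem sat_orList {l : List (AFml C O A)} : sat v (orList l) ↔ ∃ F ∈ l, sat v F := by
  induction l with
  | nil => exact iff_of_false id (by simp)
  | cons F l ih =>
    change sat v (orF F (orList l)) ↔ _
    simp [sat_orF, ih]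

theorem sat_exF {x : ℕ} : sat v (exF x F) ↔ ∃ r, sat (Function.update v x r) F := by
  simp only [exF, sat_negF, AFml.sat, not_forall, not_not]

theorem sat_exList {xs : List ℕ} (hnd : xs.Nodup) :
    sat v (exList xs F) ↔
      ∃ rs : List (Pre C), rs.length = xs.length ∧ sat (updList v xs rs) F := by
  induction xs generalizing v with
  | nil =>
    refine ⟨fun h => ⟨[], rfl, h⟩, ?_⟩
    rintro ⟨rs, hlen, h⟩
    rwa [List.length_eq_zero_iff.mp hlen] at h
  | cons x xs ih =>
    rw [List.nodup_cons] at hnd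
    change sat v (exF x (exList xs F)) ↔ _
    simp only [sat_exF, ih hnd.2, updList_update_comm hnd.1]
    constructor
    · rintro ⟨r, rs, hlen, h⟩
      exact ⟨r :: rs, by simp [hlen], h⟩
    · rintro ⟨_ | ⟨r, rs⟩, hlen, h⟩
      · simp at hlen
      · exact ⟨r, rs, by simpa using hlen, h⟩

theorem sat_allList {xs : List ℕ} (hnd : xs.Nodup) :
    sat v (allList xs F) ↔
      ∀ rs : List (Pre C), rs.length = xs.length → sat (updList v xs rs) F := by
  induction xs generalizing v with
  | nil =>
    refine ⟨fun h rs hlen => ?_, fun h => h [] rfl⟩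
    rwa [List.length_eq_zero_iff.mp hlen]
  | cons x xs ih =>
    rw [List.nodup_cons] at hnd
    change (∀ r, sat (Function.update v x r) (allList xs F)) ↔ _
    simp only [ih hnd.2, updList_update_comm hnd.1]
    constructor
    · rintro h (_ | ⟨r, rs⟩) hlen
      · simp at hlen
      · exact h r rs (by simpa using hlen)
    · exact fun h r rs hlen => h (r :: rs) (by simp [hlen])

end AFml

namespace Term

variable {C O : Type} (opFun : O → List ℤ → Option ℤ)

mutual
theorem val_congr {u v : Val C} (t : Term C O) (h : ∀ x ∈ t.varList, u x = v x) :
    val opFun u t = val opFun v t := by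
  cases t with
  | num | sym | inf | sup => rfl
  | var x => simp only [val, h x (by simp [varList])]
  | app f ts | op o ts =>
    simp only [val, vals_congr ts fun x hx => h x (by simpa [varList] using hx)]
  | interval t₁ t₂ =>
    simp only [val, val_congr t₁ fun x hx => h x (by simp [varList, hx]),
      val_congr t₂ fun x hx => h x (by simp [varList, hx])]

theorem vals_congr {u v : Val C} (ts : List (Term C O)) (h : ∀ x ∈ varListL ts, u x = v x) :
    vals opFun u ts = vals opFun v ts := by
  cases ts with
  | nil => rfl
  | cons t ts =>
    funext rs
    simp only [vals, val_congr t fun x hx => h x (by simp [varListL, hx]),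
      vals_congr ts fun x hx => h x (by simp [varListL, hx])]
end

theorem vals_length {v : Val C} {ts : List (Term C O)} {rs : List (Pre C)}
    (h : vals opFun v ts rs) : rs.length = ts.length := by
  induction ts generalizing rs with
  | nil => rw [h]; rfl
  | cons t ts ih =>
    obtain ⟨r, rs, rfl, -, h⟩ := h
    simp [ih h]

mutual
theorem val_toTerm (v : Val C) (r : Pre C) : val opFun v (Pre.toTerm (O := O) r) = {r} := by
  cases r with
  | inf | sup | num | sym => rfl
  | app f rs =>
    ext q
    simp [Pre.toTerm, val, vals_toTermL v rs]

theorem vals_toTermL (v : Val C) (rs : List (Pre C)) :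
    vals opFun v (Pre.toTermL (O := O) rs) = (· = rs) := by
  cases rs with
  | nil => rfl
  | cons r rs =>
    funext q
    simp [Pre.toTermL, vals, val_toTerm v r, vals_toTermL v rs, eq_comm]
end

end Term

section PhiTau

variable {C O A : Type} (opFun : O → List ℤ → Option ℤ)
  (aggFun : A → Set (List (Pre C)) → Pre C) (lt : Pre C → Pre C → Prop) {I : Interp C}

local notation "sat" => AFml.sat opFun aggFun lt I

open AFml

theorem sat_memConj {u : Val C} {ws : List ℕ} {ts : List (Term C O)}
    (hlen : ws.length = ts.length) :
    sat u (memConj (A := A) ws ts) ↔ Term.vals opFun u ts (ws.map u) := by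
  induction ws generalizing ts with
  | nil =>
    rw [List.length_eq_zero_iff.mp hlen.symm]
    exact iff_of_true (fun h => h) rfl
  | cons w ws ih =>
    cases ts with
    | nil => simp at hlen
    | cons t ts =>
      change sat u (andF _ (memConj ws ts)) ↔ _
      simp [sat_andF, ih (Nat.succ.inj hlen), Term.vals, AFml.sat, AArg.eval]

theorem sat_atom_map_var {u : Val C} {p : C} {ws : List ℕ} :
    sat u (atom p (ws.map AArg.var)) ↔ (p, ws.map u) ∈ I := by
  change (p, AArg.evalL opFun aggFun lt I u (ws.map AArg.var)) ∈ I ↔ _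
  suffices AArg.evalL opFun aggFun lt I u (ws.map (AArg.var (C := C) (O := O) (A := A))) =
    ws.map u by rw [this]
  induction ws with
  | nil => rfl
  | cons w ws ih => simp [AArg.evalL, AArg.eval, ih]

theorem sat_phiLit_iff_sat_tauLit (v : Val C) (l : Lit C O) :
    sat v (phiLit l) ↔ IForm.sat I (tauLit opFun v l) := by
  obtain ⟨pos, p, ts⟩ := l
  simp only [phiLit, Lit.varList, map_add_range_eq_range']
  set n := freshVar (Term.varListL ts)
  have hnd : (List.range' n ts.length).Nodup := List.nodup_range' ..
  have hmemConj : ∀ q : List (Pre C), q.length = ts.length →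
      (sat (updList v (List.range' n ts.length) q) (memConj (List.range' n ts.length) ts) ↔
        Term.vals opFun v ts q) := fun q hq => by
    rw [sat_memConj opFun aggFun lt List.length_range', map_updList hnd (by simpa using hq),
      Term.vals_congr opFun ts fun x hx => updList_apply_of_not_mem fun hmem =>
        (List.mem_range'_1.mp hmem).1.not_gt (lt_freshVar hx)]
  rw [sat_exList opFun aggFun lt hnd, List.length_range']
  change (∃ q : List (Pre C), q.length = ts.length ∧ sat _ (andF (memConj _ ts) _)) ↔ _
  cases pos <;>
  · simp only [tauLit, sat_andF, sat_negF, sat_atom_map_var, IForm.sat,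
      IForm.neg, Bool.false_eq_true, if_true, if_false, Subtype.exists, exists_prop]
    constructor
    · rintro ⟨q, hq, hvals, hq'⟩
      exact ⟨q, (hmemConj q hq).mp hvals, by simpa [map_updList hnd, hq] using hq'⟩
    · rintro ⟨q, hvals, hq'⟩
      have hq := Term.vals_length opFun hvals
      exact ⟨q, hq, (hmemConj q hq).mpr hvals, by simpa [map_updList hnd, hq] using hq'⟩

theorem sat_phiComp_iff_sat_tauComp (v : Val C) (c : Comp C O) :
    sat v (phiComp c) ↔ IForm.sat I (tauComp opFun lt v c) := by
  simp only [phiComp, sat_exF, sat_andF, AFml.sat, AArg.eval]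
  set n := freshVar c.varList
  have hval : ∀ (t : Term C O), (∀ x ∈ t.varList, x ∈ c.varList) → ∀ r₁ r₂,
      Term.val opFun (Function.update (Function.update v n r₁) (n + 1) r₂) t =
        Term.val opFun v t := fun t ht r₁ r₂ =>
    Term.val_congr opFun t fun x hx => by
      have := lt_freshVar (ht x hx)
      rw [Function.update_of_ne (by omega), Function.update_of_ne (by omega)]
  have hne : n ≠ n + 1 := by omega
  simp only [hval c.lhs (fun x hx => List.mem_append_left _ hx),
    hval c.rhs (fun x hx => List.mem_append_right _ hx), Function.update_self,
    Function.update_of_ne hne]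
  unfold tauComp
  split_ifs with h
  · exact iff_of_true (by simpa using h) IForm.sat_top
  · exact iff_of_false (by simpa using h) id

theorem sat_phiCond_iff_sat_tauCond (v : Val C) (cond : List (CondElem C O)) :
    sat v (phiCond (A := A) cond) ↔ IForm.sat I (tauCond opFun lt v cond) := by
  rw [phiCond, tauCond, sat_andList, IForm.sat_conjList, List.forall_mem_map, List.forall_mem_map]
  refine forall₂_congr fun ce _ => ?_
  cases ce with
  | inl l => exact sat_phiLit_iff_sat_tauLit opFun aggFun lt v l
  | inr c => exact sat_phiComp_iff_sat_tauComp opFun aggFun lt v c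

theorem tauLit_congr {u v : Val C} {l : Lit C O} (h : ∀ x ∈ l.varList, u x = v x) :
    tauLit opFun u l = tauLit opFun v l := by
  rw [tauLit, tauLit, Term.vals_congr opFun l.args h]

theorem tauComp_congr {u v : Val C} {c : Comp C O} (h : ∀ x ∈ c.varList, u x = v x) :
    tauComp opFun lt u c = tauComp opFun lt v c := by
  rw [tauComp, tauComp, Term.val_congr opFun c.lhs fun x hx => h x (List.mem_append_left _ hx),
    Term.val_congr opFun c.rhs fun x hx => h x (List.mem_append_right _ hx)]

theorem tauCond_congr {u v : Val C} {cond : List (CondElem C O)}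
    (h : ∀ x ∈ cond.flatMap CondElem.varList, u x = v x) :
    tauCond opFun lt u cond = tauCond opFun lt v cond := by
  refine congrArg _ (List.map_congr_left fun ce hce => ?_)
  have hce : ∀ x ∈ ce.varList, u x = v x := fun x hx =>
    h x (List.mem_flatMap.mpr ⟨ce, hce, hx⟩)
  cases ce with
  | inl l => exact tauLit_congr opFun hce
  | inr c => exact tauComp_congr opFun lt hce

/-- The set of tuples whose condition holds is the only `Δ` whose implication in `τ` can fail. -/
theorem sat_tauAgg {v : Val C} {ys : List ℕ} {E : AggExpr C O A} :
    IForm.sat I (tauAgg opFun aggFun lt v ys E) ↔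
      Justifies opFun aggFun lt v ys E
        {rs | IForm.sat I (tauCond opFun lt (updList v ys rs.val) E.cond)} := by
  constructor
  · intro h
    by_contra hJ
    obtain ⟨⟨rs, hrs⟩, hsat⟩ := h ⟨_, hJ⟩ fun rs => rs.2
    exact hrs hsat
  · intro hJ Δ hΔ
    have hne : Δ.val ≠ {rs | IForm.sat I (tauCond opFun lt (updList v ys rs.val) E.cond)} :=
      fun he => Δ.2 (he ▸ hJ)
    obtain ⟨rs, hrs, hrsΔ⟩ := Set.exists_of_ssubset
      (Set.ssubset_iff_subset_ne.mpr ⟨fun rs hrs => hΔ ⟨rs, hrs⟩, hne⟩)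
    exact ⟨⟨rs, hrsΔ⟩, hrs⟩

theorem val_boundTerm {u v : Val C} {b : ℕ ⊕ Pre C} (h : ∀ x, b = .inl x → u x = v x) :
    Term.val opFun u (boundTerm (O := O) b) = {boundVal v b} := by
  cases b with
  | inl x => exact congrArg _ (h x rfl)
  | inr r => exact Term.val_toTerm opFun u r

namespace AggExpr

variable {E : AggExpr C O A} {x : ℕ}

theorem mem_varList_of_mem_ts (hx : x ∈ Term.varListL E.ts) : x ∈ E.varList :=
  List.mem_append_left _ (List.mem_append_left _ hx)

theorem mem_varList_of_mem_cond (hx : x ∈ E.cond.flatMap CondElem.varList) : x ∈ E.varList :=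
  List.mem_append_left _ (List.mem_append_right _ hx)

theorem mem_varList_of_bound_eq (hx : E.bound = .inl x) : x ∈ E.varList :=
  List.mem_append_right _ (by simp [hx, boundVarList])

end AggExpr

/-- The set aggregated by `φ^X` is the set `[Δ]` that `τ` tests, for `Δ` the tuples whose
condition holds. -/
theorem setOf_sat_aggCondition_eq {v w : Val C} {xs ys zs : List ℕ} {E : AggExpr C O A}
    (hxs : xs.Nodup) (hys : ys.Nodup) (hzs : zs.Nodup) (hlen : zs.length = E.ts.length)
    (hxys : ∀ x ∈ E.varList, x ∈ ys ↔ x ∈ xs)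
    (hzxs : ∀ z ∈ zs, z ∉ xs) (hzE : ∀ z ∈ zs, z ∉ E.varList)
    (hwv : ∀ x ∈ E.varList, x ∉ xs → w x = v x) :
    {q | q.length = zs.length ∧
        sat (updList w zs q) (exList xs (andF (memConj zs E.ts) (phiCond E.cond)))} =
      {q | ∃ rs ∈ {rs : AggTuple C ys |
          IForm.sat I (tauCond opFun lt (updList v ys rs.val) E.cond)},
        Term.vals opFun (updList v ys rs.val) E.ts q} := by
  let P (q : List (Pre C)) (u : Val C) : Prop :=
    Term.vals opFun u E.ts q ∧ IForm.sat I (tauCond opFun lt u E.cond)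
  have hP : ∀ q u u', (∀ x ∈ E.varList, u x = u' x) → P q u → P q u' := by
    intro q u u' h hu
    simp only [P] at hu ⊢
    rwa [← Term.vals_congr opFun E.ts fun x hx => h x (AggExpr.mem_varList_of_mem_ts hx),
      ← tauCond_congr opFun lt fun x hx => h x (AggExpr.mem_varList_of_mem_cond hx)]
  ext q
  simp only [Set.mem_ofPred_eq, sat_exList opFun aggFun lt hxs]
  constructor
  · rintro ⟨hq, ls, -, hsat⟩
    set u := updList (updList w zs q) xs ls
    have hzu : zs.map u = q := by
      rw [List.map_congr_left fun z hz => updList_apply_of_not_mem (hzxs z hz), map_updList hzs hq]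
    rw [sat_andF, sat_memConj opFun aggFun lt hlen, hzu, sat_phiCond_iff_sat_tauCond] at hsat
    have hu : ∀ x ∈ E.varList, x ∉ ys → u x = v x := fun x hx hxy => by
      rw [hxys x hx] at hxy
      rw [show u x = _ from updList_apply_of_not_mem hxy, updList_apply_of_not_mem (hzE x · hx),
        hwv x hx hxy]
    obtain ⟨rs, hrs, hPrs⟩ := (exists_updList_iff (hP q) hys).mpr ⟨u, hu, hsat⟩
    exact ⟨⟨rs, hrs⟩, hPrs.2, hPrs.1⟩
  · rintro ⟨⟨rs, hrs⟩, hcond, hvals⟩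
    have hq : q.length = zs.length := hlen ▸ Term.vals_length opFun hvals
    obtain ⟨u, hu, hPu⟩ := (exists_updList_iff (hP q) hys).mp ⟨rs, hrs, hvals, hcond⟩
    have hu' : ∀ x ∈ E.varList, x ∉ xs → u x = updList w zs q x := fun x hx hxxs => by
      rw [hu x hx ((hxys x hx).not.mpr hxxs), updList_apply_of_not_mem (hzE x · hx), hwv x hx hxxs]
    obtain ⟨ls, hls, hPls⟩ := (exists_updList_iff (hP q) hxs).mpr ⟨u, hu', hPu⟩
    refine ⟨hq, ls, hls, ?_⟩
    have hzu : zs.map (updList (updList w zs q) xs ls) = q := by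
      rw [List.map_congr_left fun z hz => updList_apply_of_not_mem (hzxs z hz), map_updList hzs hq]
    rw [sat_andF, sat_memConj opFun aggFun lt hlen, hzu, sat_phiCond_iff_sat_tauCond]
    exact hPls


theorem sat_phiAgg_iff_sat_tauAgg {xs : List ℕ} (hxs : xs.Nodup) (v : Val C) (E : AggExpr C O A) :
    sat v (phiAgg xs E) ↔
      IForm.sat I (tauAgg opFun aggFun lt v (E.varList.dedup.filter (· ∈ xs)) E) := by
  simp only [phiAgg, map_add_range_eq_range']
  set n := freshVar (xs ++ E.varList)
  set ys := E.varList.dedup.filter (· ∈ xs)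
  set zs := List.range' (n + 1) E.ts.length
  have hxn : ∀ x ∈ xs, x < n := fun x hx => lt_freshVar (List.mem_append_left _ hx)
  have hEn : ∀ x ∈ E.varList, x < n := fun x hx => lt_freshVar (List.mem_append_right _ hx)
  have hzn : ∀ z ∈ zs, n < z := fun z hz => (List.mem_range'_1.mp hz).1
  have hset : ∀ r, {q | q.length = zs.length ∧ sat (updList (Function.update v n r) zs q)
      (exList xs (andF (andList ((zs.zip E.ts).map fun q => mem (AArg.var q.1) q.2))
        (phiCond E.cond)))} =
      {q | ∃ rs ∈ {rs : AggTuple C ys |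
          IForm.sat I (tauCond opFun lt (updList v ys rs.val) E.cond)},
        Term.vals opFun (updList v ys rs.val) E.ts q} := fun r =>
    setOf_sat_aggCondition_eq opFun aggFun lt hxs ((List.nodup_dedup _).filter _)
      (List.nodup_range' ..) List.length_range' (by simp +contextual [ys])
      (fun z hz hzx => (hzn z hz).not_gt (hxn z hzx))
      (fun z hz hzE => (hzn z hz).not_gt (hEn z hzE))
      (fun x hx _ => Function.update_of_ne (hEn x hx).ne _ _)
  have hbound : ∀ r, Term.val opFun (Function.update v n r) (boundTerm E.bound) =
      {boundVal v E.bound} := fun r =>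
    val_boundTerm opFun fun x hx =>
      Function.update_of_ne (hEn x (AggExpr.mem_varList_of_bound_eq hx)).ne _ _
  rw [sat_exF, sat_tauAgg, Justifies]
  simp only [sat_andF, AFml.sat, AArg.eval, Function.update_self, hset, hbound,
    Set.mem_singleton_iff, exists_eq_right]


theorem sat_phiBody_iff_sat_tauBody {loc : List ℕ} (hloc : loc.Nodup) (v : Val C)
    (b : List (BElem C O A)) :
    sat v (phiBody loc b) ↔ IForm.sat I (tauBody opFun aggFun lt v loc b) := by
  rw [phiBody, tauBody, sat_andList, IForm.sat_conjList, List.forall_mem_map, List.forall_mem_map]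
  refine forall₂_congr fun e _ => ?_
  cases e with
  | lit l => exact sat_phiLit_iff_sat_tauLit opFun aggFun lt v l
  | comp c => exact sat_phiComp_iff_sat_tauComp opFun aggFun lt v c
  | agg E => exact sat_phiAgg_iff_sat_tauAgg opFun aggFun lt hloc v E

theorem tauAgg_congr {u v : Val C} {ys : List ℕ} {E : AggExpr C O A}
    (h : ∀ x ∈ E.varList, x ∉ ys → u x = v x)
    (hb : boundVal u E.bound = boundVal v E.bound) :
    tauAgg opFun aggFun lt u ys E = tauAgg opFun aggFun lt v ys E := by
  have hupd : ∀ rs : AggTuple C ys, ∀ x ∈ E.varList,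
      updList u ys rs.val x = updList v ys rs.val x := fun rs x hx => by
    by_cases hxy : x ∈ ys
    · exact updList_apply_indep_of_mem rs.2 hxy
    · rw [updList_apply_of_not_mem hxy, updList_apply_of_not_mem hxy, h x hx hxy]
  have hcond : ∀ rs : AggTuple C ys, tauCond opFun lt (updList u ys rs.val) E.cond =
      tauCond opFun lt (updList v ys rs.val) E.cond := fun rs =>
    tauCond_congr opFun lt fun x hx => hupd rs x (AggExpr.mem_varList_of_mem_cond hx)
  have hvals : ∀ rs : AggTuple C ys, Term.vals opFun (updList u ys rs.val) E.ts =
      Term.vals opFun (updList v ys rs.val) E.ts := fun rs =>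
    Term.vals_congr opFun E.ts fun x hx => hupd rs x (AggExpr.mem_varList_of_mem_ts hx)
  have hJ : Justifies opFun aggFun lt u ys E = Justifies opFun aggFun lt v ys E := by
    funext Δ
    simp only [Justifies, hvals, hb]
  simp only [tauAgg, hcond]
  rw [hJ]

namespace Rule

variable {R : Rule C O A} {x : ℕ}

theorem globalList_nodup (R : Rule C O A) : R.globalList.Nodup := List.nodup_dedup _

theorem localList_nodup (R : Rule C O A) : R.localList.Nodup := (List.nodup_dedup _).filter _

theorem mem_globalList_of_mem_head (h : x ∈ R.head.varList) : x ∈ R.globalList :=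
  List.mem_dedup.mpr (List.mem_append_left _ h)

theorem mem_globalList_of_mem_body {e : BElem C O A} (he : e ∈ R.body)
    (h : x ∈ (match e with
      | .lit l => l.varList
      | .comp c => c.varList
      | .agg E => boundVarList E.bound)) : x ∈ R.globalList :=
  List.mem_dedup.mpr (List.mem_append_right _ (List.mem_flatMap.mpr ⟨e, he, h⟩))

theorem mem_globalList_of_mem_agg {E : AggExpr C O A} (hE : .agg E ∈ R.body)
    (hx : x ∈ E.varList) (hloc : x ∉ R.localList) : x ∈ R.globalList := by
  rcases List.mem_append.mp hx with hlhs | hbound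
  · by_contra hglob
    exact hloc (List.mem_filter.mpr
      ⟨List.mem_dedup.mpr (List.mem_flatMap.mpr ⟨.agg E, hE, hlhs⟩), by simpa using hglob⟩)
  · exact mem_globalList_of_mem_body hE hbound

theorem mem_varList_of_mem_globalList (h : x ∈ R.globalList) : x ∈ R.varList := by
  rcases List.mem_append.mp (List.mem_dedup.mp h) with hhead | hbody
  · exact List.mem_append_left _ hhead
  · obtain ⟨e, he, hx⟩ := List.mem_flatMap.mp hbody
    refine List.mem_append_right _ (List.mem_flatMap.mpr ⟨e, he, ?_⟩)
    cases e with
    | lit | comp => exact hx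
    | agg E => exact List.mem_append_right _ hx

end Rule

theorem tauBody_congr {u w : Val C} {R : Rule C O A} (h : ∀ x ∈ R.globalList, u x = w x) :
    tauBody opFun aggFun lt u R.localList R.body =
      tauBody opFun aggFun lt w R.localList R.body := by
  refine congrArg _ (List.map_congr_left fun e he => ?_)
  cases e with
  | lit l => exact tauLit_congr opFun fun x hx => h x (Rule.mem_globalList_of_mem_body he hx)
  | comp c => exact tauComp_congr opFun lt fun x hx => h x (Rule.mem_globalList_of_mem_body he hx)
  | agg E =>
    refine tauAgg_congr opFun aggFun lt (fun x hx hxloc => h x ?_) ?_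
    · refine Rule.mem_globalList_of_mem_agg he hx fun hloc => hxloc ?_
      exact List.mem_filter.mpr ⟨List.mem_dedup.mpr hx, by simpa using hloc⟩
    · cases hbound : E.bound with
      | inl x => exact h x (Rule.mem_globalList_of_mem_body he (by simp [hbound, boundVarList]))
      | inr => rfl

end PhiTau

section Completion

variable {C O A : Type} (opFun : O → List ℤ → Option ℤ)
  (aggFun : A → Set (List (Pre C)) → Pre C) (lt : Pre C → Pre C → Prop) {I : Interp C}

local notation "sat" => AFml.sat opFun aggFun lt I

open AFml

/-- The instance of `R` given by `v` contributes a disjunct of `τ₁Γ|_a` that `I` satisfies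
(for a choice rule that disjunct is `τ(Body) ∧ ¬¬a`). -/
def InstanceSupports (I : Interp C) (v : Val C) (R : Rule C O A) (a : EGAtom C) : Prop :=
  match R.head with
  | .basic p ts => p = a.1 ∧ Term.vals opFun v ts a.2 ∧
      IForm.sat I (tauBody opFun aggFun lt v R.localList R.body)
  | .choice p ts => p = a.1 ∧ Term.vals opFun v ts a.2 ∧
      IForm.sat I (tauBody opFun aggFun lt v R.localList R.body) ∧ a ∈ I
  | .empty => False

theorem exists_tau1_iff {Γ : Set (Rule C O A)} {a : EGAtom C} :
    (∃ ir ∈ tau1 opFun aggFun lt Γ, ir.head = a ∧ IForm.sat I ir.body) ↔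
      ∃ R ∈ Γ, ∃ v, InstanceSupports opFun aggFun lt I v R a := by
  constructor
  · rintro ⟨ir, ⟨R, hR, v,
      ⟨p, ts, rs, hhead, hvals, rfl⟩ | ⟨p, ts, rs, hhead, hvals, rfl⟩⟩, rfl, hbody⟩
    · exact ⟨R, hR, v, by simpa [InstanceSupports, hhead] using ⟨hvals, hbody⟩⟩
    · rw [IForm.sat_and] at hbody
      exact ⟨R, hR, v, by simpa [InstanceSupports, hhead] using
        ⟨hvals, hbody.1, not_not.mp hbody.2⟩⟩
  · rintro ⟨R, hR, v, hsupp⟩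
    unfold InstanceSupports at hsupp
    split at hsupp
    · next p ts hhead =>
      obtain ⟨rfl, hvals, hbody⟩ := hsupp
      exact ⟨_, ⟨R, hR, v, .inl ⟨_, ts, _, hhead, hvals, rfl⟩⟩, rfl, hbody⟩
    · next p ts hhead =>
      obtain ⟨rfl, hvals, hbody, ha⟩ := hsupp
      exact ⟨_, ⟨R, hR, v, .inr ⟨_, ts, _, hhead, hvals, rfl⟩⟩, rfl,
        IForm.sat_and.mpr ⟨hbody, not_not.mpr ha⟩⟩
    · exact hsupp.elim

theorem InstanceSupports.congr {u w : Val C} {R : Rule C O A} {a : EGAtom C}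
    (h : ∀ x ∈ R.globalList, u x = w x) (hu : InstanceSupports opFun aggFun lt I u R a) :
    InstanceSupports opFun aggFun lt I w R a := by
  have hhead : ∀ ts : List (Term C O), (∀ x ∈ Term.varListL ts, x ∈ R.head.varList) →
      Term.vals opFun u ts = Term.vals opFun w ts := fun ts hts =>
    Term.vals_congr opFun ts fun x hx => h x (Rule.mem_globalList_of_mem_head (hts x hx))
  unfold InstanceSupports at hu ⊢
  rw [← tauBody_congr opFun aggFun lt h]
  split at hu <;> simp_all [Head.varList]

theorem definesB_of_instanceSupports [DecidableEq C] {v : Val C} {R : Rule C O A} {p : C}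
    {rs : List (Pre C)} (h : InstanceSupports opFun aggFun lt I v R (p, rs)) :
    definesB p rs.length R = true := by
  unfold InstanceSupports at h
  unfold definesB
  split at h
  · simp [h.1, Term.vals_length opFun h.2.1]
  · simp [h.1, Term.vals_length opFun h.2.1]
  · exact h.elim

theorem sat_ruleAnte [DecidableEq C] {u : Val C} {R : Rule C O A} {p : C} {Vs : List ℕ}
    (hR : definesB p Vs.length R = true) :
    sat u (ruleAnte Vs R) ↔ InstanceSupports opFun aggFun lt I u R (p, Vs.map u) := by
  unfold definesB at hR
  unfold ruleAnte InstanceSupports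
  split at hR
  · obtain ⟨rfl, hlen⟩ := of_decide_eq_true hR
    simp [sat_andF, sat_memConj opFun aggFun lt hlen.symm,
      sat_phiBody_iff_sat_tauBody opFun aggFun lt R.localList_nodup]
  · obtain ⟨rfl, hlen⟩ := of_decide_eq_true hR
    simp [sat_andF, sat_memConj opFun aggFun lt hlen.symm,
      sat_phiBody_iff_sat_tauBody opFun aggFun lt R.localList_nodup, sat_atom_map_var]
  · exact absurd hR Bool.false_ne_true

theorem sat_orList_exList_ruleAnte_iff [DecidableEq C] {Γ : List (Rule C O A)} {p : C} {v : Val C}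
    {Vs : List ℕ} {rs : List (Pre C)} (hVs : Vs.Nodup) (hlen : rs.length = Vs.length)
    (hfresh : ∀ R ∈ Γ, ∀ x ∈ R.globalList, x ∉ Vs) :
    sat (updList v Vs rs) (orList ((Γ.filter (definesB p Vs.length)).map
        fun R => exList R.globalList (ruleAnte Vs R))) ↔
      ∃ R ∈ Γ, ∃ u, InstanceSupports opFun aggFun lt I u R (p, rs) := by
  simp only [sat_orList, List.mem_map, List.mem_filter, exists_exists_and_eq_and]
  refine exists_congr fun R => and_assoc.trans (and_congr_right fun hR => ?_)
  have hVsmap : ∀ gs, Vs.map (updList (updList v Vs rs) R.globalList gs) = rs := fun gs => by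
    rw [List.map_congr_left fun x hx => updList_apply_of_not_mem fun hxg => hfresh R hR x hxg hx,
      map_updList hVs hlen]
  rw [← hlen]
  constructor
  · rintro ⟨hdef, hsat⟩
    rw [sat_exList opFun aggFun lt R.globalList_nodup] at hsat
    obtain ⟨gs, -, hsat⟩ := hsat
    rw [sat_ruleAnte opFun aggFun lt (hlen ▸ hdef), hVsmap] at hsat
    exact ⟨_, hsat⟩
  · rintro ⟨u, hu⟩
    refine ⟨definesB_of_instanceSupports opFun aggFun lt hu, ?_⟩
    rw [sat_exList opFun aggFun lt R.globalList_nodup]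
    obtain ⟨gs, hgs, hsupp⟩ :=
      (exists_updList_iff (fun _ _ h => InstanceSupports.congr opFun aggFun lt h)
        R.globalList_nodup (w := updList v Vs rs)).mpr ⟨u, fun _ hx hx' => absurd hx hx', hu⟩
    refine ⟨gs, hgs, ?_⟩
    rwa [sat_ruleAnte opFun aggFun lt (hlen ▸ definesB_of_instanceSupports opFun aggFun lt hu),
      hVsmap]

theorem sat_completedDef [DecidableEq C] (Γ : List (Rule C O A)) (p : C) (n : ℕ) (v : Val C) :
    sat v (completedDef Γ p n) ↔ ∀ rs : List (Pre C), rs.length = n →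
      ((p, rs) ∈ I ↔ ∃ R ∈ Γ, ∃ u, InstanceSupports opFun aggFun lt I u R (p, rs)) := by
  simp only [completedDef, map_add_range_eq_range']
  set Vs := List.range' (freshVar (Γ.flatMap Rule.varList)) n
  have hVs : Vs.Nodup := List.nodup_range' ..
  have hfresh : ∀ R ∈ Γ, ∀ x ∈ R.globalList, x ∉ Vs := fun R hR x hx hxVs =>
    (List.mem_range'_1.mp hxVs).1.not_gt
      (lt_freshVar (List.mem_flatMap.mpr ⟨R, hR, Rule.mem_varList_of_mem_globalList hx⟩))
  rw [sat_allList opFun aggFun lt hVs, List.length_range']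
  refine forall₂_congr fun rs hrs => ?_
  rw [sat_iffF, sat_atom_map_var, map_updList hVs (hrs.trans List.length_range'.symm),
    ← List.length_range' (s := freshVar (Γ.flatMap Rule.varList)) (n := n),
    sat_orList_exList_ruleAnte_iff opFun aggFun lt hVs (hrs.trans List.length_range'.symm) hfresh]

end Completion

/-- Lemma 5: for any finite EG program `Γ`, the completion of
the infinitary program `τ₁Γ` (with the vocabulary of `Γ` as signature) is
satisfied by the same interpretations of the vocabulary of `Γ` as the set of
completed definitions of the predicate symbols occurring in `Γ`. -/
theorem lemma_5 {C O A : Type} [DecidableEq C]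
    (opFun : O → List ℤ → Option ℤ)
    (aggFun : A → Set (List (Pre C)) → Pre C)
    (lt : Pre C → Pre C → Prop) (hlt : PreOrderOK lt)
    (Γ : List (Rule C O A)) (I : Interp C) (hI : I ⊆ vocab {R | R ∈ Γ}) :
    IProg.satCompletionOn (vocab {R | R ∈ Γ}) I (tau1 opFun aggFun lt {R | R ∈ Γ}) ↔
      ∀ (p : C) (n : ℕ), (∃ R ∈ Γ, Rule.hasPredSym p n R) →
        ∀ v : Val C, AFml.sat opFun aggFun lt I v (completedDef Γ p n) := by
  simp only [IProg.satCompletionOn, exists_tau1_iff, sat_completedDef]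
  constructor
  · rintro h p _ hocc - rs rfl
    exact h (p, rs) hocc
  · rintro h ⟨p, rs⟩ hocc
    exact h p rs.length hocc (fun _ => .inf) rs rfl

end EG
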